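/- arXiv:math/0311170 — 2 statements merged into one kernel-verified Lean document; each statement's English description precedes it below -/
import Mathlib

section
/- Let G be a finite group. The chain relation ≈ on isomorphism classes of irreducible finite-dimensional complex representations of G — where D ≈ D' if and only if there exist finitely many irreducible representations D₁, …, Dₙ of G such that D and D' both occur in the tensor product D₁ ⊗ ⋯ ⊗ Dₙ — is an equivalence relation; in particular it is transitive. -/
/-!
Statement 0: For a finite group `G`, the chain relation on irreducible
finite-dimensional complex representations of `G` — where `D ≈ D'` iff there
exist finitely many irreducible representations `D₁, …, Dₙ` such that `D` and
`D'` both occur in `D₁ ⊗ ⋯ ⊗ Dₙ` — is an equivalence relation (in particular,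
transitive).
-/

open CategoryTheory MonoidalCategory

noncomputable section

variable {G : Type} [Group G]

/-- An irreducible representation `D` *occurs* in `T` if there is a nonzero
`G`-equivariant linear map from `D` to `T`. -/
def OccursIn (D T : FDRep ℂ G) : Prop := ∃ f : D ⟶ T, f ≠ 0

/-- The tensor product `D₁ ⊗ ⋯ ⊗ Dₙ` of a list of representations. -/
def tensorList : List (FDRep ℂ G) → FDRep ℂ G
  | [] => 𝟙_ (FDRep ℂ G)
  | X :: L => X ⊗ tensorList L

/-- Chain equivalence: `D ≈ D'` iff there is a nonempty finite chain
`D₁, …, Dₙ` of irreducible representations such that `D` and `D'` both occur in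
`D₁ ⊗ ⋯ ⊗ Dₙ`. -/
def ChainRel (D D' : FDRep ℂ G) : Prop :=
  ∃ L : List (FDRep ℂ G), L ≠ [] ∧ (∀ X ∈ L, Simple X) ∧
    OccursIn D (tensorList L) ∧ OccursIn D' (tensorList L)

/-- The type of irreducible finite-dimensional complex representations of `G`. -/
def IrrRep (G : Type) [Group G] := {V : FDRep ℂ G // Simple V}

/-!
Symmetry is built into the definition, and `D` is chain equivalent to itself via the chain `[D]`.
For transitivity, let `D, D'` occur in `T` and `D', D''` occur in `S`. The coevaluation of `D'`
turns `D' ⟶ T` into a nonzero map `𝟙 ⟶ T ⊗ D'ᘁ`, and likewise `𝟙 ⟶ D'ᘁ ⊗ S` (using the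
braiding), so both `D` and `D''` occur in `T ⊗ D'ᘁ ⊗ S`, since over a field a tensor product of
nonzero maps is nonzero. This is again a tensor product of irreducibles because `D'ᘁ` is
irreducible: a nonzero subrepresentation `Y ⊆ D'ᘁ` has a nonzero mate `D' ⟶ Yᘁ`, which is
injective as `D'` is simple, so `dim D' ≤ dim Y ≤ dim D'ᘁ = dim D'`.
-/

universe u

open Limits

theorem TensorProduct.tmul_ne_zero {K V W : Type*} [Field K] [AddCommGroup V] [Module K V]
    [AddCommGroup W] [Module K W] {v : V} {w : W} (hv : v ≠ 0) (hw : w ≠ 0) :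
    v ⊗ₜ[K] w ≠ 0 := by
  obtain ⟨φ, hφ⟩ := Module.Projective.exists_dual_eq_one K hv
  obtain ⟨ψ, hψ⟩ := Module.Projective.exists_dual_eq_one K hw
  intro h
  have := congrArg (LinearMap.mul' K K ∘ₗ TensorProduct.map φ ψ) h
  simp [hφ, hψ] at this

section RightRigid

variable {C : Type*} [Category C] [Preadditive C] [MonoidalCategory C] [MonoidalPreadditive C]

theorem tensorRightHomEquiv_ne_zero_iff {X Y Y' Z : C} [ExactPairing Y Y'] {f : X ⊗ Y ⟶ Z} :
    tensorRightHomEquiv X Y Y' Z f ≠ 0 ↔ f ≠ 0 :=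
  (tensorRightHomEquiv X Y Y' Z).injective.ne_iff' (by simp [tensorRightHomEquiv])

theorem exists_ne_zero_hom_rightDual [BraidedCategory C] [RightRigidCategory C] {X Y : C}
    {f : Y ⟶ Xᘁ} (hf : f ≠ 0) : ∃ g : X ⟶ Yᘁ, g ≠ 0 := by
  set p := (tensorRightHomEquiv Y X Xᘁ (𝟙_ C)).symm (f ≫ (λ_ _).inv)
  have hp : p ≠ 0 := by
    rw [← tensorRightHomEquiv_ne_zero_iff (Y' := Xᘁ), Equiv.apply_symm_apply]
    exact mt (zero_of_comp_mono _) hf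
  exact ⟨tensorRightHomEquiv X Y Yᘁ (𝟙_ C) ((β_ X Y).hom ≫ p) ≫ (λ_ _).hom,
    mt (zero_of_comp_mono _) (tensorRightHomEquiv_ne_zero_iff.2 (mt (zero_of_epi_comp _) hp))⟩

end RightRigid

namespace FDRep

variable {k H : Type u} [Field k]

section Monoid

variable [Monoid H]

theorem eq_zero_iff_forall_apply_eq_zero {V W : FDRep k H} (f : V ⟶ W) :
    f = 0 ↔ ∀ v, f v = 0 :=
  ⟨by rintro rfl v; rfl, fun h => by ext v; exact h v⟩

theorem isZero_iff_finrank_eq_zero (V : FDRep k H) : IsZero V ↔ Module.finrank k V = 0 := by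
  rw [IsZero.iff_id_eq_zero, eq_zero_iff_forall_apply_eq_zero, Module.finrank_zero_iff,
    subsingleton_iff_forall_eq 0]
  rfl

theorem injective_of_mono {V W : FDRep k H} (f : V ⟶ W) [Mono f] : Function.Injective f :=
  (Rep.mono_iff_injective ((forget₂ (FDRep k H) (Rep k H)).map f)).1 inferInstance

theorem tensorHom_ne_zero {A B C D : FDRep k H} {f : A ⟶ B} {g : C ⟶ D} (hf : f ≠ 0)
    (hg : g ≠ 0) : f ⊗ₘ g ≠ 0 := by
  simp only [Ne, eq_zero_iff_forall_apply_eq_zero, not_forall] at hf hg ⊢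
  obtain ⟨x, hx⟩ := hf
  obtain ⟨y, hy⟩ := hg
  exact ⟨x ⊗ₜ y, TensorProduct.tmul_ne_zero hx hy⟩

end Monoid

variable [Group H]

theorem finrank_rightDual (V : FDRep k H) :
    Module.finrank k (Vᘁ : FDRep k H) = Module.finrank k V :=
  Subspace.dual_finrank_eq

instance simple_rightDual (V : FDRep k H) [Simple V] : Simple (Vᘁ : FDRep k H) where
  mono_isIso_iff_nonzero {Y} f _ := by
    refine ⟨fun hf hf0 => ?_, fun hf => ?_⟩
    · rw [hf0, isIsoZero_iff_source_target_isZero] at hf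
      have hdual := (isZero_iff_finrank_eq_zero _).1 hf.2
      rw [finrank_rightDual, ← isZero_iff_finrank_eq_zero] at hdual
      exact Simple.not_isZero V hdual
    · obtain ⟨g, hg⟩ := exists_ne_zero_hom_rightDual hf
      have : Mono g := mono_of_nonzero_from_simple hg
      have hdim : Module.finrank k Y = Module.finrank k (Vᘁ : FDRep k H) := by
        have hgY : Module.finrank k V ≤ Module.finrank k (Yᘁ : FDRep k H) :=
          LinearMap.finrank_le_finrank_of_injective (injective_of_mono g)
        have hfV : Module.finrank k Y ≤ Module.finrank k (Vᘁ : FDRep k H) :=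
          LinearMap.finrank_le_finrank_of_injective (injective_of_mono f)
        rw [finrank_rightDual] at hgY hfV ⊢
        omega
      refine (ConcreteCategory.isIso_iff_bijective f).2 ⟨injective_of_mono f, ?_⟩
      exact (LinearMap.injective_iff_surjective_of_finrank_eq_finrank hdim).1 (injective_of_mono f)

end FDRep

theorem occursIn_self (D : FDRep ℂ G) [Simple D] : OccursIn D D :=
  ⟨𝟙 D, id_nonzero D⟩

namespace OccursIn

variable {D D' T T' S : FDRep ℂ G}

theorem of_iso_left (e : D' ≅ D) (h : OccursIn D T) : OccursIn D' T :=
  let ⟨f, hf⟩ := h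
  ⟨e.hom ≫ f, mt (zero_of_epi_comp _) hf⟩

theorem of_iso_right (h : OccursIn D T) (e : T ≅ T') : OccursIn D T' :=
  let ⟨f, hf⟩ := h
  ⟨f ≫ e.hom, mt (zero_of_comp_mono _) hf⟩

theorem tensor (h : OccursIn D T) (h' : OccursIn D' S) : OccursIn (D ⊗ D') (T ⊗ S) :=
  let ⟨f, hf⟩ := h
  let ⟨f', hf'⟩ := h'
  ⟨f ⊗ₘ f', FDRep.tensorHom_ne_zero hf hf'⟩

theorem unit_tensor_rightDual (h : OccursIn D T) : OccursIn (𝟙_ (FDRep ℂ G)) (T ⊗ Dᘁ) :=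
  let ⟨f, hf⟩ := h
  ⟨tensorRightHomEquiv _ D Dᘁ T ((λ_ D).hom ≫ f),
    tensorRightHomEquiv_ne_zero_iff.2 (mt (zero_of_epi_comp _) hf)⟩

end OccursIn

def tensorListAppendIso : (L M : List (FDRep ℂ G)) →
    (tensorList (L ++ M) ≅ tensorList L ⊗ tensorList M)
  | [], M => (λ_ (tensorList M)).symm
  | X :: L, M => whiskerLeftIso X (tensorListAppendIso L M) ≪≫ (α_ X _ _).symm

namespace ChainRel

theorem refl (D : FDRep ℂ G) [Simple D] : ChainRel D D :=
  have h : OccursIn D (tensorList [D]) := (occursIn_self D).of_iso_right (ρ_ D).symm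
  ⟨[D], List.cons_ne_nil _ _, by simpa, h, h⟩

theorem symm {D D' : FDRep ℂ G} : ChainRel D D' → ChainRel D' D
  | ⟨L, hL, hsimple, hD, hD'⟩ => ⟨L, hL, hsimple, hD', hD⟩

theorem trans {D D' D'' : FDRep ℂ G} [Simple D'] (h₁ : ChainRel D D') (h₂ : ChainRel D' D'') :
    ChainRel D D'' := by
  obtain ⟨L, -, hL, hDL, hD'L⟩ := h₁
  obtain ⟨M, -, hM, hD'M, hD''M⟩ := h₂
  have hLA : OccursIn (𝟙_ _) (tensorList L ⊗ D'ᘁ) := hD'L.unit_tensor_rightDual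
  have hAM : OccursIn (𝟙_ _) (D'ᘁ ⊗ tensorList M) :=
    hD'M.unit_tensor_rightDual.of_iso_right (β_ _ _)
  let e : tensorList (L ++ D'ᘁ :: M) ≅ tensorList L ⊗ (D'ᘁ ⊗ tensorList M) :=
    tensorListAppendIso L (D'ᘁ :: M)
  refine ⟨L ++ D'ᘁ :: M, by simp, ?_, ?_, ?_⟩
  · simp only [List.mem_append, List.mem_cons]
    rintro X (hX | rfl | hX)
    exacts [hL X hX, inferInstance, hM X hX]
  · exact ((hDL.tensor hAM).of_iso_right e.symm).of_iso_left (ρ_ D).symm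
  · exact ((hLA.tensor hD''M).of_iso_right (α_ _ _ _ ≪≫ e.symm)).of_iso_left (λ_ D'').symm

end ChainRel

theorem chainRel_is_equivalence_general (G : Type) [Group G] :
    Equivalence (fun D D' : IrrRep G => ChainRel D.1 D'.1) :=
  { refl := fun D => haveI := D.2; ChainRel.refl D.1
    symm := ChainRel.symm
    trans := fun {_ D' _} h₁ h₂ => haveI := D'.2; h₁.trans h₂ }

theorem chainRel_is_equivalence (G : Type) [Group G] [Finite G] :
    Equivalence (fun D D' : IrrRep G => ChainRel D.1 D'.1) :=
  chainRel_is_equivalence_general G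
end
end

section
/- Let G be a finite group. The assignment η([D]) := Υ_D is a well-defined group homomorphism from the chain group 𝒞(G) to the character group Hom(Z(G), ℂˣ) of the center of G; that is, Υ_{[D₁] ⊠ [D₂]} = Υ_{D₁} · Υ_{D₂}. -/
open CategoryTheory MonoidalCategory

noncomputable section

variable {G : Type} [Group G]

/-- `V` has central character `χ` if every central element `c` acts in `V` as
the scalar `χ c`. -/
def HasCentralChar (V : FDRep ℂ G) (χ : Subgroup.center G →* ℂˣ) : Prop :=
  ∀ c : Subgroup.center G, V.ρ (c : G) = (χ c : ℂ) • LinearMap.id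

/-! By Schur's lemma the endomorphisms of a simple representation over an algebraically closed
field are scalars, so every central element acts on it by a scalar. Central characters multiply
under tensor products, and a nonzero equivariant map `D ⟶ T` forces the central characters of `D`
and `T` to agree. Hence every constituent of `D₁ ⊗ ⋯ ⊗ Dₙ` has central character
`Υ_{D₁} ⋯ Υ_{Dₙ}`, which gives both well-definedness on chain classes and multiplicativity. -/

namespace FDRep

variable {k : Type} [Field k]

def centralEnd (V : FDRep k G) : Subgroup.center G →* End V where
  toFun c :=
    { hom := Action.ρ V c
      comm := fun g => by
        rw [← End.mul_def, ← End.mul_def, ← map_mul, ← map_mul,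
          Subgroup.mem_center_iff.mp c.2 g] }
  map_one' := Action.Hom.ext (map_one (Action.ρ V))
  map_mul' c d := Action.Hom.ext (map_mul (Action.ρ V) (c : G) d)

def endAlgEquivOfSimple [IsAlgClosed k] (V : FDRep k G) [Simple V] : k ≃ₐ[k] End V :=
  AlgEquiv.ofBijective (Algebra.ofId k (End V))
    ⟨(algebraMap k (End V)).injective, fun f =>
      (endomorphism_simple_eq_smul_id k f).imp fun c hc => by
        rwa [Algebra.ofId_apply, Algebra.algebraMap_eq_smul_one]⟩

theorem endAlgEquivOfSimple_apply [IsAlgClosed k] (V : FDRep k G) [Simple V] (a : k) :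
    V.endAlgEquivOfSimple a = a • 𝟙 V :=
  Algebra.algebraMap_eq_smul_one a

def centralChar [IsAlgClosed k] (V : FDRep k G) [Simple V] : Subgroup.center G →* kˣ :=
  ((V.endAlgEquivOfSimple.symm : End V →* k).comp V.centralEnd).toHomUnits

theorem hasCentralChar_centralChar (V : FDRep ℂ G) [Simple V] :
    HasCentralChar V V.centralChar := by
  intro c
  have h := V.endAlgEquivOfSimple.apply_symm_apply (V.centralEnd c)
  rw [endAlgEquivOfSimple_apply] at h
  exact congrArg (fun f => f.hom.hom.hom) h.symm

end FDRep

theorem HasCentralChar.eq_of_occursIn {D T : FDRep ℂ G} {χ ψ : Subgroup.center G →* ℂˣ}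
    (hD : HasCentralChar D χ) (hT : HasCentralChar T ψ) (h : OccursIn D T) : χ = ψ := by
  obtain ⟨f, hf⟩ := h
  have hf' : f.hom.hom.hom ≠ 0 := fun h0 => hf (by ext x; exact LinearMap.congr_fun h0 x)
  ext c
  have comm : f.hom.hom.hom ∘ₗ D.ρ c = T.ρ c ∘ₗ f.hom.hom.hom :=
    congrArg (fun f => f.hom.hom) (f.comm c)
  rw [hD c, hT c, LinearMap.comp_smul, LinearMap.smul_comp, LinearMap.comp_id,
    LinearMap.id_comp] at comm
  exact smul_left_injective ℂ hf' comm

theorem HasCentralChar.tensor {X Y : FDRep ℂ G} {χ ψ : Subgroup.center G →* ℂˣ}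
    (hX : HasCentralChar X χ) (hY : HasCentralChar Y ψ) : HasCentralChar (X ⊗ Y) (χ * ψ) := by
  intro c
  show TensorProduct.map (X.ρ c) (Y.ρ c) = _
  rw [hX c, hY c, TensorProduct.map_smul_left, TensorProduct.map_smul_right,
    TensorProduct.map_id, smul_smul, MonoidHom.mul_apply, Units.val_mul]

theorem hasCentralChar_tensorUnit : HasCentralChar (𝟙_ (FDRep ℂ G)) 1 := by
  intro c
  show LinearMap.id = _
  rw [MonoidHom.one_apply, Units.val_one, one_smul]

theorem exists_hasCentralChar_tensorList {L : List (FDRep ℂ G)} (hL : ∀ X ∈ L, Simple X) :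
    ∃ χ, HasCentralChar (tensorList L) χ := by
  induction L with
  | nil => exact ⟨1, hasCentralChar_tensorUnit⟩
  | cons X L ih =>
    obtain ⟨ψ, hψ⟩ := ih fun Y hY => hL Y (List.mem_cons_of_mem X hY)
    have := hL X List.mem_cons_self
    exact ⟨X.centralChar * ψ, X.hasCentralChar_centralChar.tensor hψ⟩

theorem centralChar_chainGroup_hom_general (G : Type) [Group G] :
    (∀ (D D' : FDRep ℂ G), Simple D → Simple D' →
      ∀ (χ χ' : Subgroup.center G →* ℂˣ),
        HasCentralChar D χ → HasCentralChar D' χ' → ChainRel D D' → χ = χ') ∧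
    (∀ (D₁ D₂ D : FDRep ℂ G), Simple D₁ → Simple D₂ → Simple D →
      ∀ (χ₁ χ₂ : Subgroup.center G →* ℂˣ),
        HasCentralChar D₁ χ₁ → HasCentralChar D₂ χ₂ →
        OccursIn D (D₁ ⊗ D₂) → HasCentralChar D (χ₁ * χ₂)) := by
  constructor
  · rintro D D' - - χ χ' hχ hχ' ⟨L, -, hL, hD, hD'⟩
    obtain ⟨ψ, hψ⟩ := exists_hasCentralChar_tensorList hL
    rw [hχ.eq_of_occursIn hψ hD, hχ'.eq_of_occursIn hψ hD']
  · rintro D₁ D₂ D - - hD χ₁ χ₂ hχ₁ hχ₂ hocc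
    rw [← D.hasCentralChar_centralChar.eq_of_occursIn (hχ₁.tensor hχ₂) hocc]
    exact D.hasCentralChar_centralChar

/-- The assignment `η([D]) := Υ_D` is a well-defined group homomorphism from
the chain group `𝒞(G)` to the character group of the center of `G`:
(a) chain-equivalent irreducible representations have equal central characters
(well-definedness), and (b) `Υ_{[D₁] ⊠ [D₂]} = Υ_{D₁} · Υ_{D₂}`, i.e. any
irreducible constituent `D` of `D₁ ⊗ D₂` has central character
`Υ_{D₁} · Υ_{D₂}` (pointwise product of homomorphisms `Z(G) →* ℂˣ`). -/
theorem centralChar_chainGroup_hom (G : Type) [Group G] [Finite G] :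
    (∀ (D D' : FDRep ℂ G), Simple D → Simple D' →
      ∀ (χ χ' : Subgroup.center G →* ℂˣ),
        HasCentralChar D χ → HasCentralChar D' χ' → ChainRel D D' → χ = χ') ∧
    (∀ (D₁ D₂ D : FDRep ℂ G), Simple D₁ → Simple D₂ → Simple D →
      ∀ (χ₁ χ₂ : Subgroup.center G →* ℂˣ),
        HasCentralChar D₁ χ₁ → HasCentralChar D₂ χ₂ →
        OccursIn D (D₁ ⊗ D₂) → HasCentralChar D (χ₁ * χ₂)) :=
  centralChar_chainGroup_hom_general G

end
end
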